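/- Let ℓ be a prime, V an 𝔽_ℓ-vector space, e : V × V → μ_ℓ a bilinear pairing, α, β ∈ V with ζ := e(α,β) a primitive ℓ-th root of unity. Let U ⊆ End(V) be an additive subgroup such that e(α, μ(β)) = 1 for all μ ∈ U, and let U₁ be the subgroup generated by the identity and U. Then the map T : V × V × (U₁/U) → μ_ℓ given by T(xα, yβ, z·id + U) = e(xα, (z·id + μ)(yβ)) for any μ ∈ U is well-defined and equals ζ^{xyz}; in particular T is trilinear (multiplicative in each of x, y, z). -/

import Mathlib

section BiadditivePairing

variable {V M : Type*} [AddCommGroup V] [CommGroup M]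

theorem map_zsmul_of_map_add (f : V → M) (hf : ∀ u v, f (u + v) = f u * f v) (x : ℤ) (u : V) :
    f (x • u) = f u ^ x :=
  (AddMonoidHom.mk' (fun u => Additive.ofMul (f u)) hf).map_zsmul x u

theorem pairing_zsmul_zsmul (e : V → V → M)
    (hl : ∀ u v w : V, e (u + v) w = e u w * e v w)
    (hr : ∀ u v w : V, e u (v + w) = e u v * e u w) (x y : ℤ) (u v : V) :
    e (x • u) (y • v) = e u v ^ (x * y) := by
  rw [map_zsmul_of_map_add (e · (y • v)) (fun u u' => hl u u' _),
    map_zsmul_of_map_add (e u) (hr u), ← zpow_mul, mul_comm]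

end BiadditivePairing

theorem stmt6_general {ℓ : ℕ} {V M : Type*} [AddCommGroup V]
    [Module (ZMod ℓ) V] [CommGroup M]
    (e : V → V → M)
    (hl : ∀ u v w : V, e (u + v) w = e u w * e v w)
    (hr : ∀ u v w : V, e u (v + w) = e u v * e u w)
    (α β : V)
    (U : AddSubgroup (Module.End (ZMod ℓ) V))
    (hU : ∀ μ ∈ U, e α (μ β) = 1) :
    ∀ (x y z : ℤ) (μ : Module.End (ZMod ℓ) V), μ ∈ U →
      e (x • α) ((z • (1 : Module.End (ZMod ℓ) V) + μ) (y • β)) =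
        (e α β) ^ (x * y * z) := by
  intro x y z μ hμ
  have h_apply : (z • (1 : Module.End (ZMod ℓ) V) + μ) (y • β) = (y * z) • β + y • μ β := by
    simp only [map_zsmul, LinearMap.add_apply, LinearMap.smul_apply, Module.End.one_apply,
      smul_add, smul_smul]
  calc e (x • α) ((z • (1 : Module.End (ZMod ℓ) V) + μ) (y • β))
      = e α β ^ (x * (y * z)) * e α (μ β) ^ (x * y) := by
        rw [h_apply, hr, pairing_zsmul_zsmul e hl hr, pairing_zsmul_zsmul e hl hr]
    _ = e α β ^ (x * y * z) := by rw [hU μ hμ, one_zpow, mul_one, mul_assoc]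

/-- the core trilinear map. If `e(α, μ(β)) = 1` for all `μ ∈ U`, then
`T(x•α, y•β, z·id + U) = e(x•α, (z·id + μ)(y•β))` is independent of the representative
`z·id + μ` (`μ ∈ U`) and equals `ζ^{xyz}` where `ζ = e(α, β)`; in particular it is
trilinear. -/
theorem stmt6 {ℓ : ℕ} [Fact ℓ.Prime] {V M : Type*} [AddCommGroup V]
    [Module (ZMod ℓ) V] [CommGroup M]
    (e : V → V → M)
    (hl : ∀ u v w : V, e (u + v) w = e u w * e v w)
    (hr : ∀ u v w : V, e u (v + w) = e u v * e u w)
    (α β : V) (hζ : orderOf (e α β) = ℓ)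
    (U : AddSubgroup (Module.End (ZMod ℓ) V))
    (hU : ∀ μ ∈ U, e α (μ β) = 1) :
    ∀ (x y z : ℤ) (μ : Module.End (ZMod ℓ) V), μ ∈ U →
      e (x • α) ((z • (1 : Module.End (ZMod ℓ) V) + μ) (y • β)) =
        (e α β) ^ (x * y * z) :=
  stmt6_general e hl hr α β U hU
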